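/- Let ã ∈ ℝⁿ, let P be an n×n real positive definite matrix and let r > 0. If ãᵀ P ã > r², then the unique minimizer of v ↦ (1/2)·(v − ã)ᵀ P (v − ã) over the set {v ∈ ℝⁿ : vᵀ P v ≤ r²} is v* = (r/√(ãᵀ P ã))·ã. -/

import Mathlib

/-!
Write `⟪u, v⟫ = uᵀ P v`. The point `v* = s • ã` (with `0 < s ≤ 1`) lies on the boundary of the
ellipsoid, and for feasible `v` we have `2⟪v, v*⟫ ≤ ⟪v, v⟫ + ⟪v*, v*⟫ ≤ 2⟪v*, v*⟫`, i.e.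
`⟪v − v*, ã⟫ ≤ 0`. Since `v* − ã = (s − 1) • ã`, the cross term in
`⟪v − ã, v − ã⟫ = ⟪v − v*, v − v*⟫ + 2⟪v − v*, v* − ã⟫ + ⟪v* − ã, v* − ã⟫` is nonnegative, so
`f v ≥ f v* + ½ ⟪v − v*, v − v*⟫`. This gives minimality, and uniqueness by definiteness of `P`.
-/

open Matrix

namespace Matrix

variable {ι : Type*} [Fintype ι] {P : Matrix ι ι ℝ}

theorem IsSymm.dotProduct_mulVec_comm (hP : P.IsSymm) (u v : ι → ℝ) :
    u ⬝ᵥ P *ᵥ v = v ⬝ᵥ P *ᵥ u := by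
  rw [dotProduct_mulVec, ← mulVec_transpose, hP.eq, dotProduct_comm]

theorem IsSymm.add_dotProduct_mulVec_add (hP : P.IsSymm) (u v : ι → ℝ) :
    (u + v) ⬝ᵥ P *ᵥ (u + v) = u ⬝ᵥ P *ᵥ u + 2 * (u ⬝ᵥ P *ᵥ v) + v ⬝ᵥ P *ᵥ v := by
  rw [mulVec_add, dotProduct_add, add_dotProduct, add_dotProduct, hP.dotProduct_mulVec_comm v u]
  ring

namespace PosSemidef

theorem dotProduct_mulVec_self_nonneg (hP : P.PosSemidef) (v : ι → ℝ) : 0 ≤ v ⬝ᵥ P *ᵥ v := by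
  simpa using hP.dotProduct_mulVec_nonneg v

theorem two_mul_dotProduct_mulVec_le (hP : P.PosSemidef) (u v : ι → ℝ) :
    2 * (u ⬝ᵥ P *ᵥ v) ≤ u ⬝ᵥ P *ᵥ u + v ⬝ᵥ P *ᵥ v := by
  have h := hP.dotProduct_mulVec_self_nonneg (u + (-1 : ℝ) • v)
  rw [(isHermitian_iff_isSymm.mp hP.isHermitian).add_dotProduct_mulVec_add] at h
  simp only [mulVec_smul, dotProduct_smul, smul_dotProduct, smul_eq_mul] at h
  linarith

theorem radial_projection_dotProduct_mulVec_le (hP : P.PosSemidef) {a p v : ι → ℝ} {s : ℝ}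
    (hs : 0 < s) (hs1 : s ≤ 1) (hp : p = s • a) (hv : v ⬝ᵥ P *ᵥ v ≤ p ⬝ᵥ P *ᵥ p) :
    (p - a) ⬝ᵥ P *ᵥ (p - a) + (v - p) ⬝ᵥ P *ᵥ (v - p) ≤ (v - a) ⬝ᵥ P *ᵥ (v - a) := by
  have hcross : (v - p) ⬝ᵥ P *ᵥ a ≤ 0 := by
    have hscale : s * ((v - p) ⬝ᵥ P *ᵥ a) = v ⬝ᵥ P *ᵥ p - p ⬝ᵥ P *ᵥ p := by
      rw [← smul_eq_mul, ← dotProduct_smul, ← mulVec_smul, ← hp, sub_dotProduct]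
    nlinarith [hP.two_mul_dotProduct_mulVec_le v p]
  have hpa : p - a = (s - 1) • a := by rw [sub_smul, one_smul, hp]
  rw [← sub_add_sub_cancel v p a,
    (isHermitian_iff_isSymm.mp hP.isHermitian).add_dotProduct_mulVec_add, hpa]
  simp only [mulVec_smul, dotProduct_smul, smul_eq_mul]
  nlinarith [mul_nonneg_of_nonpos_of_nonpos (sub_nonpos.mpr hs1) hcross]

end PosSemidef

theorem PosDef.eq_of_dotProduct_mulVec_sub_nonpos (hP : P.PosDef) {u v : ι → ℝ}
    (h : (u - v) ⬝ᵥ P *ᵥ (u - v) ≤ 0) : u = v := by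
  by_contra huv
  have := hP.dotProduct_mulVec_pos (sub_ne_zero.mpr huv)
  simp only [star_trivial] at this
  linarith

end Matrix

/-- If `ãᵀ P ã > r²`, the unique minimizer of `v ↦ (1/2)(v − ã)ᵀ P (v − ã)` over
`{v : vᵀ P v ≤ r²}` is `v* = (r/√(ãᵀ P ã))·ã`. -/
theorem stmt1 {n : ℕ} (P : Matrix (Fin n) (Fin n) ℝ) (hP : P.PosDef)
    (atil : Fin n → ℝ) (r : ℝ) (hr : 0 < r)
    (ha : atil ⬝ᵥ P *ᵥ atil > r ^ 2)
    (f : (Fin n → ℝ) → ℝ) (hf : f = fun v => (1 / 2) * ((v - atil) ⬝ᵥ P *ᵥ (v - atil)))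
    (vStar : Fin n → ℝ) (hvStar : vStar = (r / Real.sqrt (atil ⬝ᵥ P *ᵥ atil)) • atil) :
    vStar ⬝ᵥ P *ᵥ vStar ≤ r ^ 2 ∧
      (∀ v, v ⬝ᵥ P *ᵥ v ≤ r ^ 2 → f vStar ≤ f v) ∧
      ∀ v, v ⬝ᵥ P *ᵥ v ≤ r ^ 2 → (∀ w, w ⬝ᵥ P *ᵥ w ≤ r ^ 2 → f v ≤ f w) → v = vStar := by
  have hqa : 0 < atil ⬝ᵥ P *ᵥ atil := lt_trans (by positivity) ha
  have hs : 0 < r / √(atil ⬝ᵥ P *ᵥ atil) := div_pos hr (Real.sqrt_pos.mpr hqa)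
  have hs1 : r / √(atil ⬝ᵥ P *ᵥ atil) ≤ 1 :=
    div_le_one_of_le₀ (Real.le_sqrt_of_sq_le ha.le) (Real.sqrt_nonneg _)
  have hvStar_norm : vStar ⬝ᵥ P *ᵥ vStar = r ^ 2 := by
    rw [hvStar]
    simp only [mulVec_smul, dotProduct_smul, smul_dotProduct, smul_eq_mul]
    field_simp
    rw [Real.sq_sqrt hqa.le]
  have hproj : ∀ v, v ⬝ᵥ P *ᵥ v ≤ r ^ 2 → (vStar - atil) ⬝ᵥ P *ᵥ (vStar - atil) +
      (v - vStar) ⬝ᵥ P *ᵥ (v - vStar) ≤ (v - atil) ⬝ᵥ P *ᵥ (v - atil) := fun v hv =>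
    hP.posSemidef.radial_projection_dotProduct_mulVec_le hs hs1 hvStar (hvStar_norm ▸ hv)
  subst hf
  refine ⟨hvStar_norm.le, fun v hv => ?_, fun v hv hmin => ?_⟩
  · have := hP.posSemidef.dotProduct_mulVec_self_nonneg (v - vStar)
    linarith [hproj v hv]
  · refine hP.eq_of_dotProduct_mulVec_sub_nonpos ?_
    linarith [hproj v hv, hmin vStar hvStar_norm.le]
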